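/- arXiv:2006.06068 — 3 statements merged into one kernel-verified Lean document; each statement's English description precedes it below -/
import Mathlib

section
/- With the setup of the variance-reduced coordinate estimator: x, g̃ ∈ ℝ^d, r uniform on {1,...,d}, g̃'_r = ∂_r f(x), g̃'_i = g̃_i for i ≠ r, F̃ = g̃ + d(g̃' − g̃), and Ẽ = ∇f(x) − F̃; then E_r[|Ẽ|²] = (d−1)|∇f(x) − g̃|². -/
/-!
Write `v = ∇f(x) - g̃`, so that `Ẽ = v - d v_r e_r`. Expanding the square,
`|v - c v_r e_r|² = |v|² + (c² - 2c) v_r²`, and summing over `r` turns `∑ v_r²` into `|v|²`;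
at `c = d` the average over `r` is `(1 + d - 2) |v|²`.
-/

open Finset

namespace EuclideanSpace

variable {ι : Type*} [Fintype ι] [DecidableEq ι]

theorem norm_sub_smul_single_sq (v : EuclideanSpace ℝ ι) (r : ι) (a : ℝ) :
    ‖v - a • single r (1 : ℝ)‖ ^ 2 = ‖v‖ ^ 2 - 2 * a * v r + a ^ 2 := by
  rw [norm_sub_sq_real, real_inner_smul_right, inner_single_right, norm_smul,
    PiLp.norm_single]
  simp only [one_mul, norm_one, mul_one, Real.norm_eq_abs, sq_abs, starRingEnd_apply,
    star_trivial]
  ring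

theorem sum_norm_sub_smul_single_sq (v : EuclideanSpace ℝ ι) (c : ℝ) :
    ∑ r, ‖v - (c * v r) • single r (1 : ℝ)‖ ^ 2
      = (Fintype.card ι + c ^ 2 - 2 * c) * ‖v‖ ^ 2 := by
  have hsum : ∑ r, v r ^ 2 = ‖v‖ ^ 2 := by
    simp only [norm_sq_eq, Real.norm_eq_abs, sq_abs]
  simp only [norm_sub_smul_single_sq, sum_add_distrib, sum_sub_distrib, sum_const, card_univ,
    nsmul_eq_mul]
  simp only [mul_pow, mul_assoc, ← pow_two, ← mul_sum, hsum]
  ring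

theorem average_norm_sub_card_smul_single_sq (v : EuclideanSpace ℝ ι) :
    (Fintype.card ι : ℝ)⁻¹ * ∑ r, ‖v - (Fintype.card ι * v r) • single r (1 : ℝ)‖ ^ 2
      = (Fintype.card ι - 1) * ‖v‖ ^ 2 := by
  rcases isEmpty_or_nonempty ι with hι | hι
  · simp [Subsingleton.elim v 0]
  have hcard : (Fintype.card ι : ℝ) ≠ 0 := by positivity
  rw [sum_norm_sub_smul_single_sq]
  field_simp
  ring

end EuclideanSpace

theorem rcad_estimator_variance_general (d : ℕ)
    (f : EuclideanSpace ℝ (Fin d) → ℝ)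
    (x gt : EuclideanSpace ℝ (Fin d)) :
    ((d : ℝ))⁻¹ * ∑ r : Fin d,
        ‖gradient f x -
          (gt + (d : ℝ) • ((gradient f x r - gt r) • EuclideanSpace.single r (1 : ℝ)))‖ ^ 2
      = ((d : ℝ) - 1) * ‖gradient f x - gt‖ ^ 2 := by
  have hestimator : ∀ r : Fin d,
      gradient f x - (gt + (d : ℝ) • ((gradient f x r - gt r) • EuclideanSpace.single r 1))
        = (gradient f x - gt) - ((d : ℝ) * (gradient f x - gt) r) • EuclideanSpace.single r 1 := by
    intro r
    rw [smul_smul, PiLp.sub_apply]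
    abel
  simp only [hestimator]
  simpa using EuclideanSpace.average_norm_sub_card_smul_single_sq (gradient f x - gt)

/-- Variance of the variance-reduced coordinate estimator: with `g̃'` equal to `g̃` updated at
the random coordinate `r` to `∂_r f(x)`, `F̃ = g̃ + d(g̃' − g̃)` and `Ẽ = ∇f(x) − F̃`, the
expectation over the uniformly random coordinate `r` of `|Ẽ|²` equals
`(d−1)|∇f(x) − g̃|²`. -/
theorem rcad_estimator_variance (d : ℕ) (hd : 0 < d)
    (f : EuclideanSpace ℝ (Fin d) → ℝ) (hf : Differentiable ℝ f)
    (x gt : EuclideanSpace ℝ (Fin d)) :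
    ((d : ℝ))⁻¹ * ∑ r : Fin d,
        ‖gradient f x -
          (gt + (d : ℝ) • ((gradient f x r - gt r) • EuclideanSpace.single r (1 : ℝ)))‖ ^ 2
      = ((d : ℝ) - 1) * ‖gradient f x - gt‖ ^ 2 :=
  rcad_estimator_variance_general d f x gt
end

section
/- Let H be a symmetric d×d real matrix with μI ⪯ H ⪯ LI and set γ = 1/L, κ = L/μ. Then every eigenvalue λ of the 2d×2d symmetric block matrix [[(1−2h)I, 2hI − γhH],[2hI − γhH, (1−2h)I]] satisfies λ ≤ 1 − h/κ, for any 0 < h < 1. -/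
/-!
The block matrix `[[A, B], [B, A]]` commutes with swapping the two halves, so its eigenvalues are
those of `A + B = I - γhH` (on vectors `(w, w)`) and of `A - B = (1 - 4h)I + γhH` (on vectors
`(w, -w)`). The Rayleigh quotient bounds `μI ⪯ H ⪯ LI` give `1 - hμ/L` for the former and
`1 - 4h + h = 1 - 3h` for the latter, and `1 - 3h ≤ 1 - hμ/L` because `μ ≤ L`.
-/

open Matrix

theorem Matrix.eigenvalue_le_of_posSemidef_smul_one_sub {n : Type*} [Fintype n] [DecidableEq n]
    {M : Matrix n n ℝ} {c lam : ℝ} {v : n → ℝ} (hM : (c • 1 - M).PosSemidef) (hv : v ≠ 0)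
    (heig : M *ᵥ v = lam • v) : lam ≤ c := by
  have hshift : (c • 1 - M) *ᵥ v = (c - lam) • v := by
    rw [sub_mulVec, smul_mulVec, one_mulVec, heig, sub_smul]
  have hquad := hM.dotProduct_mulVec_nonneg v
  rw [hshift, dotProduct_smul, smul_eq_mul] at hquad
  have hnorm : 0 < star v ⬝ᵥ v := dotProduct_star_self_pos_iff.mpr hv
  exact sub_nonneg.mp (nonneg_of_mul_nonneg_left hquad hnorm)

theorem Matrix.exists_eigenvector_add_or_sub_of_fromBlocks {K n : Type*} [Field K]
    [NeZero (2 : K)] [Fintype n] {A B : Matrix n n K} {v : n ⊕ n → K} {lam : K} (hv : v ≠ 0)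
    (heig : fromBlocks A B B A *ᵥ v = lam • v) :
    (∃ w ≠ 0, (A + B) *ᵥ w = lam • w) ∨ (∃ w ≠ 0, (A - B) *ᵥ w = lam • w) := by
  set x := v ∘ Sum.inl
  set y := v ∘ Sum.inr
  rw [fromBlocks_mulVec] at heig
  have hx : A *ᵥ x + B *ᵥ y = lam • x := funext fun i => congrFun heig (Sum.inl i)
  have hy : B *ᵥ x + A *ᵥ y = lam • y := funext fun i => congrFun heig (Sum.inr i)
  by_cases hsum : x + y = 0
  · refine .inr ⟨x - y, fun hdiff => hv ?_, ?_⟩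
    · have hx0 : x = 0 := by
        have : (2 : K) • x = 0 := by rw [two_smul]; linear_combination (exp := 1) hsum + hdiff
        exact (smul_eq_zero.mp this).resolve_left two_ne_zero
      have hy0 : y = 0 := by rwa [hx0, zero_add] at hsum
      funext i
      cases i with
      | inl i => exact congrFun hx0 i
      | inr i => exact congrFun hy0 i
    · rw [sub_mulVec, mulVec_sub, mulVec_sub, smul_sub]
      linear_combination (exp := 1) hx - hy
  · refine .inl ⟨x + y, hsum, ?_⟩
    rw [add_mulVec, mulVec_add, mulVec_add, smul_add]
    linear_combination (exp := 1) hx + hy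

theorem block_matrix_eigenvalue_bound_general (d : ℕ)
    (H : Matrix (Fin d) (Fin d) ℝ)
    (μ L h : ℝ) (hμ : 0 < μ) (hμL : μ ≤ L) (hh : 0 < h)
    (hlow : (H - μ • (1 : Matrix (Fin d) (Fin d) ℝ)).PosSemidef)
    (hupp : (L • (1 : Matrix (Fin d) (Fin d) ℝ) - H).PosSemidef)
    (lam : ℝ) (v : (Fin d ⊕ Fin d) → ℝ) (hv : v ≠ 0)
    (heig : (Matrix.fromBlocks
        ((1 - 2 * h) • (1 : Matrix (Fin d) (Fin d) ℝ))
        ((2 * h) • (1 : Matrix (Fin d) (Fin d) ℝ) - ((1 / L) * h) • H)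
        ((2 * h) • (1 : Matrix (Fin d) (Fin d) ℝ) - ((1 / L) * h) • H)
        ((1 - 2 * h) • (1 : Matrix (Fin d) (Fin d) ℝ))).mulVec v = lam • v) :
    lam ≤ 1 - h / (L / μ) := by
  have hL : 0 < L := hμ.trans_le hμL
  have ht : 0 ≤ 1 / L * h := by positivity
  have hκ : h / (L / μ) = 1 / L * h * μ := by field_simp
  have htL : 1 / L * h * L = h := by field_simp
  rcases exists_eigenvector_add_or_sub_of_fromBlocks hv heig with ⟨w, hw, hsym⟩ | ⟨w, hw, hanti⟩
  · have hM : ((1 - 1 / L * h * μ) • 1 - ((1 - 2 * h) • 1 +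
        ((2 * h) • 1 - (1 / L * h) • H)) : Matrix (Fin d) (Fin d) ℝ).PosSemidef := by
      convert hlow.smul ht using 1; module
    rw [hκ]
    exact eigenvalue_le_of_posSemidef_smul_one_sub hM hw hsym
  · have hM : ((1 - 4 * h + 1 / L * h * L) • 1 - ((1 - 2 * h) • 1 -
        ((2 * h) • 1 - (1 / L * h) • H)) : Matrix (Fin d) (Fin d) ℝ).PosSemidef := by
      convert hupp.smul ht using 1; module
    calc lam ≤ 1 - 4 * h + 1 / L * h * L := eigenvalue_le_of_posSemidef_smul_one_sub hM hw hanti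
      _ = 1 - 3 * h := by rw [htL]; ring
      _ ≤ 1 - h / (L / μ) := by
        rw [hκ]; linarith [mul_le_mul_of_nonneg_left hμL ht]

/-- Let `H` be a symmetric `d×d` real matrix with `μI ⪯ H ⪯ LI`, `γ = 1/L`, `κ = L/μ`.
Every eigenvalue `λ` of the symmetric block matrix
`[[(1−2h)I, 2hI − γhH],[2hI − γhH, (1−2h)I]]` satisfies `λ ≤ 1 − h/κ`, for `0 < h < 1`. -/
theorem block_matrix_eigenvalue_bound (d : ℕ)
    (H : Matrix (Fin d) (Fin d) ℝ) (hsymm : H.IsSymm)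
    (μ L h : ℝ) (hμ : 0 < μ) (hμL : μ ≤ L) (hh : 0 < h) (hh1 : h < 1)
    (hlow : (H - μ • (1 : Matrix (Fin d) (Fin d) ℝ)).PosSemidef)
    (hupp : (L • (1 : Matrix (Fin d) (Fin d) ℝ) - H).PosSemidef)
    (lam : ℝ) (v : (Fin d ⊕ Fin d) → ℝ) (hv : v ≠ 0)
    (heig : (Matrix.fromBlocks
        ((1 - 2 * h) • (1 : Matrix (Fin d) (Fin d) ℝ))
        ((2 * h) • (1 : Matrix (Fin d) (Fin d) ℝ) - ((1 / L) * h) • H)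
        ((2 * h) • (1 : Matrix (Fin d) (Fin d) ℝ) - ((1 / L) * h) • H)
        ((1 - 2 * h) • (1 : Matrix (Fin d) (Fin d) ℝ))).mulVec v = lam • v) :
    lam ≤ 1 - h / (L / μ) :=
  block_matrix_eigenvalue_bound_general d H μ L h hμ hμL hh hlow hupp lam v hv heig
end

section
/- Let (β^m, g̃^m) be ℝ^d-valued random sequences updated as follows: a coordinate r_m uniform on {1,...,d} is drawn independently, and β^{m+1}_{r_m} = ∂_{r_m}f(y^m), g̃^{m+1}_{r_m} = ∂_{r_m}f(x^m), with all other coordinates unchanged. Then E|β^{m+1} − g̃^{m+1}|² ≤ (1 − 1/d)E|β^m − g̃^m|² + (L²/d)E|y^m − x^m|², provided ∇f is L-Lipschitz. -/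
open MeasureTheory Finset

/-!
Since `β` and `g̃` are overwritten at the same coordinate `r`, the difference `β' − g̃'` is
`β − g̃` with its `r`-th entry replaced by `(∇f(y) − ∇f(x))_r`. Averaging over `r`, the squared
norm loses `(β − g̃)_r²` and gains `(∇f(y) − ∇f(x))_r²`, which gives exactly
`(1 − 1/d)‖β − g̃‖² + (1/d)‖∇f(y) − ∇f(x)‖²`. The Lipschitz bound on `∇f` and integration
over `ω` finish the proof.
-/

namespace EuclideanSpace

variable {ι : Type*} [DecidableEq ι]

theorem add_smul_single_sub_apply_sub (a b p q : EuclideanSpace ℝ ι) (r : ι) :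
    (a + (p r - a r) • single r (1 : ℝ)) - (b + (q r - b r) • single r (1 : ℝ))
      = (a - b) + ((p - q) r - (a - b) r) • single r (1 : ℝ) := by
  simp only [PiLp.sub_apply]
  module

variable [Fintype ι]

theorem norm_sq_add_smul_single_sub_apply (v : EuclideanSpace ℝ ι) (r : ι) (c : ℝ) :
    ‖v + (c - v r) • single r (1 : ℝ)‖ ^ 2 = ‖v‖ ^ 2 - v r ^ 2 + c ^ 2 := by
  have hcoord : ∀ i, (v + (c - v r) • single r (1 : ℝ)) i ^ 2
      = v i ^ 2 + if i = r then c ^ 2 - v r ^ 2 else 0 := by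
    intro i
    rcases eq_or_ne i r with rfl | h
    · simp
    · simp [h]
  simp only [real_norm_sq_eq, hcoord, sum_add_distrib, sum_ite_eq', mem_univ, if_true]
  ring

theorem sum_norm_sq_add_smul_single_sub_apply (v c : EuclideanSpace ℝ ι) :
    ∑ r, ‖v + (c r - v r) • single r (1 : ℝ)‖ ^ 2
      = (Fintype.card ι - 1) * ‖v‖ ^ 2 + ‖c‖ ^ 2 := by
  simp only [norm_sq_add_smul_single_sub_apply, sum_add_distrib, sum_sub_distrib, sum_const,
    card_univ, nsmul_eq_mul, ← real_norm_sq_eq]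
  ring

theorem average_norm_sq_add_smul_single_sub_apply (v c : EuclideanSpace ℝ ι) :
    (Fintype.card ι : ℝ)⁻¹ * ∑ r, ‖v + (c r - v r) • single r (1 : ℝ)‖ ^ 2
      = (1 - 1 / Fintype.card ι) * ‖v‖ ^ 2 + (Fintype.card ι : ℝ)⁻¹ * ‖c‖ ^ 2 := by
  rcases isEmpty_or_nonempty ι with hι | hι
  · simp [Subsingleton.elim v 0]
  · rw [sum_norm_sq_add_smul_single_sub_apply]
    field_simp

theorem average_norm_sq_coord_update_sub_le (a b p q : EuclideanSpace ℝ ι) {L δ : ℝ}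
    (hpq : ‖p - q‖ ≤ L * δ) :
    (Fintype.card ι : ℝ)⁻¹ * ∑ r, ‖(a + (p r - a r) • single r (1 : ℝ))
        - (b + (q r - b r) • single r (1 : ℝ))‖ ^ 2
      ≤ (1 - 1 / Fintype.card ι) * ‖a - b‖ ^ 2 + L ^ 2 / Fintype.card ι * δ ^ 2 := by
  have hsq : ‖p - q‖ ^ 2 ≤ L ^ 2 * δ ^ 2 := by
    simpa only [mul_pow] using pow_le_pow_left₀ (norm_nonneg _) hpq 2
  simp only [add_smul_single_sub_apply_sub, average_norm_sq_add_smul_single_sub_apply]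
  rw [div_mul_eq_mul_div, div_eq_inv_mul (L ^ 2 * δ ^ 2)]
  gcongr

end EuclideanSpace

theorem rcad_gradient_memory_contraction_general (d : ℕ)
    (f : EuclideanSpace ℝ (Fin d) → ℝ) (L : ℝ)
    (hL : ∀ x x' : EuclideanSpace ℝ (Fin d),
      ‖gradient f x - gradient f x'‖ ≤ L * ‖x - x'‖)
    {Ω : Type*} [MeasurableSpace Ω] (P : Measure Ω)
    (x y β g : Ω → EuclideanSpace ℝ (Fin d))
    (hint1 : Integrable (fun ω => ‖β ω - g ω‖ ^ 2) P)
    (hint2 : Integrable (fun ω => ‖y ω - x ω‖ ^ 2) P)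
    (hint3 : Integrable (fun ω => ((d : ℝ))⁻¹ * ∑ r : Fin d,
      ‖(β ω + (gradient f (y ω) r - β ω r) • EuclideanSpace.single r (1 : ℝ))
        - (g ω + (gradient f (x ω) r - g ω r) • EuclideanSpace.single r (1 : ℝ))‖ ^ 2) P) :
    ∫ ω, ((d : ℝ))⁻¹ * ∑ r : Fin d,
        ‖(β ω + (gradient f (y ω) r - β ω r) • EuclideanSpace.single r (1 : ℝ))
          - (g ω + (gradient f (x ω) r - g ω r) • EuclideanSpace.single r (1 : ℝ))‖ ^ 2 ∂P
      ≤ (1 - 1 / (d : ℝ)) * ∫ ω, ‖β ω - g ω‖ ^ 2 ∂P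
        + L ^ 2 / (d : ℝ) * ∫ ω, ‖y ω - x ω‖ ^ 2 ∂P := by
  have hbound := hint1.const_mul (1 - 1 / (d : ℝ)) |>.add (hint2.const_mul (L ^ 2 / (d : ℝ)))
  calc _ ≤ ∫ ω, ((1 - 1 / (d : ℝ)) * ‖β ω - g ω‖ ^ 2 + L ^ 2 / (d : ℝ) * ‖y ω - x ω‖ ^ 2) ∂P :=
        integral_mono hint3 hbound fun ω => by
          simpa only [Fintype.card_fin] using
            EuclideanSpace.average_norm_sq_coord_update_sub_le (β ω) (g ω) _ _ (hL (y ω) (x ω))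
    _ = _ := by
      rw [integral_add (hint1.const_mul _) (hint2.const_mul _), integral_const_mul,
        integral_const_mul]

/-- One step of the randomized-coordinate averaging update: if `β` and `g̃` are both updated
at the same uniformly random coordinate `r` to `∂_r f(y)` and `∂_r f(x)` respectively, then
`E|β' − g̃'|² ≤ (1 − 1/d) E|β − g̃|² + (L²/d) E|y − x|²`, provided `∇f` is `L`-Lipschitz.
Here the expectation over the independent uniform coordinate `r` is written as the average
`(1/d)∑_r`, and the updated vector is expressed as `β + (∂_r f(y) − β_r)e^r`. -/
theorem rcad_gradient_memory_contraction (d : ℕ) (hd : 0 < d)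
    (f : EuclideanSpace ℝ (Fin d) → ℝ) (hf : Differentiable ℝ f) (L : ℝ)
    (hL : ∀ x x' : EuclideanSpace ℝ (Fin d),
      ‖gradient f x - gradient f x'‖ ≤ L * ‖x - x'‖)
    {Ω : Type*} [MeasurableSpace Ω] (P : Measure Ω) [IsProbabilityMeasure P]
    (x y β g : Ω → EuclideanSpace ℝ (Fin d))
    (hint1 : Integrable (fun ω => ‖β ω - g ω‖ ^ 2) P)
    (hint2 : Integrable (fun ω => ‖y ω - x ω‖ ^ 2) P)
    (hint3 : Integrable (fun ω => ((d : ℝ))⁻¹ * ∑ r : Fin d,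
      ‖(β ω + (gradient f (y ω) r - β ω r) • EuclideanSpace.single r (1 : ℝ))
        - (g ω + (gradient f (x ω) r - g ω r) • EuclideanSpace.single r (1 : ℝ))‖ ^ 2) P) :
    ∫ ω, ((d : ℝ))⁻¹ * ∑ r : Fin d,
        ‖(β ω + (gradient f (y ω) r - β ω r) • EuclideanSpace.single r (1 : ℝ))
          - (g ω + (gradient f (x ω) r - g ω r) • EuclideanSpace.single r (1 : ℝ))‖ ^ 2 ∂P
      ≤ (1 - 1 / (d : ℝ)) * ∫ ω, ‖β ω - g ω‖ ^ 2 ∂P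
        + L ^ 2 / (d : ℝ) * ∫ ω, ‖y ω - x ω‖ ^ 2 ∂P :=
  rcad_gradient_memory_contraction_general d f L hL P x y β g hint1 hint2 hint3
end
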